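/- Let φ(t) = 1 - e^t + e^{2t} + e^{3t}, let A be a finite set, let λ : A → ℝ with λ_α > 0 for all α and ∑ λ_α = 1, and let s : A → ℝ≥0. Then ∏_{α∈A} φ(s_α)^{λ_α} ≥ φ(∑_{α∈A} λ_α s_α). -/

import Mathlib

/-!
Substituting `x = eᵗ`, the quantity `φ''φ - φ'²` becomes `x (x²(x - 2)² + 4x² + 4x - 1)`,
which is nonnegative for `x ≥ 1`, i.e. `t ≥ 0`. Hence `log φ` is convex on `[0, ∞)`, and
Jensen's inequality for `log φ`, exponentiated, is the claim.
-/

open Real Set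

theorem ConvexOn.map_sum_le_prod_rpow {E ι : Type*} [AddCommGroup E] [Module ℝ E] {s : Set E}
    {f : E → ℝ} (hf : ConvexOn ℝ s fun x => log (f x)) (hpos : ∀ x ∈ s, 0 < f x)
    {t : Finset ι} {w : ι → ℝ} {p : ι → E} (hw₀ : ∀ i ∈ t, 0 ≤ w i) (hw₁ : ∑ i ∈ t, w i = 1)
    (hp : ∀ i ∈ t, p i ∈ s) :
    f (∑ i ∈ t, w i • p i) ≤ ∏ i ∈ t, f (p i) ^ w i := by
  have hmem : ∑ i ∈ t, w i • p i ∈ s := hf.1.sum_mem hw₀ hw₁ hp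
  calc f (∑ i ∈ t, w i • p i) = exp (log (f (∑ i ∈ t, w i • p i))) :=
        (exp_log (hpos _ hmem)).symm
    _ ≤ exp (∑ i ∈ t, w i • log (f (p i))) := exp_le_exp.2 (hf.map_sum_le hw₀ hw₁ hp)
    _ = ∏ i ∈ t, f (p i) ^ w i := by
        rw [exp_sum]
        refine Finset.prod_congr rfl fun i hi => ?_
        rw [rpow_def_of_pos (hpos _ (hp i hi)), smul_eq_mul, mul_comm]

theorem convexOn_log_of_sq_deriv_le {D : Set ℝ} (hD : Convex ℝ D) {f f' f'' : ℝ → ℝ}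
    (hf : ∀ x, HasDerivAt f (f' x) x) (hf' : ∀ x, HasDerivAt f' (f'' x) x)
    (hpos : ∀ x ∈ D, 0 < f x) (hsq : ∀ x ∈ interior D, f' x ^ 2 ≤ f'' x * f x) :
    ConvexOn ℝ D fun x => log (f x) := by
  have hne : ∀ x ∈ interior D, f x ≠ 0 := fun x hx => (hpos x (interior_subset hx)).ne'
  refine convexOn_of_hasDerivWithinAt2_nonneg hD (f' := fun x => f' x / f x)
    (f'' := fun x => (f'' x * f x - f' x * f' x) / f x ^ 2) ?_ ?_ ?_ ?_
  · exact fun x hx => ((hf x).continuousAt.log (hpos x hx).ne').continuousWithinAt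
  · exact fun x hx => ((hf x).log (hne x hx)).hasDerivWithinAt
  · exact fun x hx => ((hf' x).div (hf x) (hne x hx)).hasDerivWithinAt
  · exact fun x hx => div_nonneg (by nlinarith [hsq x hx]) (sq_nonneg _)

theorem hasDerivAt_exp_const_mul (c t : ℝ) :
    HasDerivAt (fun t => exp (c * t)) (c * exp (c * t)) t := by
  simpa [mul_comm] using ((hasDerivAt_id t).const_mul c).exp

theorem one_sub_exp_add_exp_two_mul_add_exp_three_mul_pos (t : ℝ) :
    0 < 1 - exp t + exp (2 * t) + exp (3 * t) := by
  have hx := exp_pos t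
  rw [show 2 * t = t + t by ring, show 3 * t = t + t + t by ring]
  simp only [exp_add]
  nlinarith [sq_nonneg (exp t - 1)]

theorem convexOn_log_one_sub_exp_add_exp_two_mul_add_exp_three_mul :
    ConvexOn ℝ (Ici 0) fun t => log (1 - exp t + exp (2 * t) + exp (3 * t)) := by
  refine convexOn_log_of_sq_deriv_le (convex_Ici 0)
    (f' := fun t => -exp t + 2 * exp (2 * t) + 3 * exp (3 * t))
    (f'' := fun t => -exp t + 4 * exp (2 * t) + 9 * exp (3 * t)) (fun t => ?_) (fun t => ?_)
    (fun t _ => ?_) (fun t ht => ?_)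
  · exact ((((hasDerivAt_const t 1).sub (hasDerivAt_exp t)).add
      (hasDerivAt_exp_const_mul 2 t)).add (hasDerivAt_exp_const_mul 3 t)).congr_deriv (by ring)
  · exact (((hasDerivAt_exp t).neg.add ((hasDerivAt_exp_const_mul 2 t).const_mul 2)).add
      ((hasDerivAt_exp_const_mul 3 t).const_mul 3)).congr_deriv (by ring)
  · exact one_sub_exp_add_exp_two_mul_add_exp_three_mul_pos t
  · rw [interior_Ici, mem_Ioi] at ht
    rw [show 2 * t = t + t by ring, show 3 * t = t + t + t by ring]
    simp only [exp_add]
    set x := exp t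
    have hx : 1 ≤ x := (one_lt_exp_iff.2 ht).le
    have hq : 0 ≤ x ^ 2 * (x - 2) ^ 2 + 4 * x ^ 2 + 4 * x - 1 := by nlinarith
    linear_combination mul_nonneg (zero_le_one.trans hx) hq

theorem stmt_6 {ι : Type*} (A : Finset ι) (lam : ι → ℝ) (s : ι → ℝ)
    (hlam : ∀ α ∈ A, 0 < lam α) (hsum : ∑ α ∈ A, lam α = 1)
    (hs : ∀ α ∈ A, 0 ≤ s α)
    (φ : ℝ → ℝ)
    (hφ : φ = fun t : ℝ => 1 - Real.exp t + Real.exp (2*t) + Real.exp (3*t)) :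
    φ (∑ α ∈ A, lam α * s α) ≤ ∏ α ∈ A, φ (s α) ^ lam α := by
  subst hφ
  exact convexOn_log_one_sub_exp_add_exp_two_mul_add_exp_three_mul.map_sum_le_prod_rpow
    (fun t _ => one_sub_exp_add_exp_two_mul_add_exp_three_mul_pos t)
    (fun α hα => (hlam α hα).le) hsum hs
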